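/- arXiv:0805.1277 — 2 statements merged into one kernel-verified Lean document; each statement's English description precedes it below -/
import Mathlib

section
/- Let (a_n), (b_n) be sequences in a field with b_0 = 1 and a_n ≠ 0 for all n, and let A be the lower triangular matrix with A(n,k) = a_n·b_{n-k}·a_k^{-1}. Then for any integer j ≥ 1, the j-th matrix power A^j has entries (A^j)(n,k) = a_n·C_{n-k}·a_k^{-1}, where C_0 = 1 and C_n = Σ_{i_1+⋯+i_j = n, each i_t ≥ 0} b_{i_1}·b_{i_2}·⋯·b_{i_j}, and consequently A^j is an SDR-matrix of order m for every m ≥ 3. -/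
/-- `A` is an SDR-matrix of order `m`: the generalized Star of David rule holds for
all `2 ≤ p ≤ m-1` and `0 ≤ r ≤ p-1`. -/
def IsSDR {F : Type*} [Field F] (m : ℕ) (A : ℕ → ℕ → F) : Prop :=
  ∀ n k p r : ℕ, 2 ≤ p → p ≤ m - 1 → r ≤ p - 1 →
    (∏ i ∈ Finset.range (r+1), A (n+i) (k+r-i)) *
      (∏ i ∈ Finset.range (p-r), A (n+p-i) (k+r+i+1)) =
    (∏ i ∈ Finset.range (r+1), A (n+p-i) (k+p-r+i)) *
      (∏ i ∈ Finset.range (p-r), A (n+i) (k+p-r-i-1))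

/-- Product of infinite lower triangular matrices. -/
def matMul {F : Type*} [Field F] (X Y : ℕ → ℕ → F) : ℕ → ℕ → F :=
  fun n k => ∑ j ∈ Finset.Icc k n, X n j * Y j k

/-- Matrix power of an infinite lower triangular matrix, `A^0` being the identity. -/
def matPow {F : Type*} [Field F] (A : ℕ → ℕ → F) : ℕ → (ℕ → ℕ → F)
  | 0 => fun n k => if n = k then 1 else 0
  | j + 1 => matMul A (matPow A j)

/-!
Writing `D = diag(a)` and `T` for the lower triangular Toeplitz matrix with entries `b (n - k)`,
we have `A = D T D⁻¹`, so `A ^ j = D T ^ j D⁻¹`, and `T ^ j` is again Toeplitz, its symbol being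
the `j`-fold convolution power of `b`. Any Toeplitz matrix satisfies the Star of David rule, since
the two sides are products of the same entries after reflecting each product; conjugating by a
diagonal matrix multiplies both sides by the same row and column factors.
-/

open Finset

namespace Finset

theorem prod_range_eq_of_reflect {M : Type*} [CommMonoid M] {f g : ℕ → M} {N : ℕ}
    (h : ∀ i < N, f i = g (N - 1 - i)) : ∏ i ∈ range N, f i = ∏ i ∈ range N, g i := by
  rw [← prod_range_reflect g N]
  exact prod_congr rfl fun i hi => h i (mem_range.1 hi)

theorem prod_range_mul_prod_range_add_comm {M : Type*} [CommMonoid M] (g : ℕ → M)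
    (s t : ℕ) :
    (∏ i ∈ range s, g i) * ∏ i ∈ range t, g (s + i) =
      (∏ i ∈ range t, g i) * ∏ i ∈ range s, g (t + i) := by
  rw [← prod_range_add, ← prod_range_add, add_comm]

namespace Nat

theorem sum_antidiagonalTuple_succ {M : Type*} [AddCommMonoid M] (k n : ℕ)
    (g : (Fin (k + 1) → ℕ) → M) :
    ∑ f ∈ antidiagonalTuple (k + 1) n, g f =
      ∑ x ∈ antidiagonal n, ∑ f ∈ antidiagonalTuple k x.2, g (Fin.cons x.1 f) := by
  change ((List.Nat.antidiagonalTuple (k + 1) n : Multiset _).map g).sum = _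
  rw [Multiset.map_coe, Multiset.sum_coe, List.Nat.antidiagonalTuple, List.flatMap,
    List.map_flatten, List.sum_flatten, List.map_map, List.map_map]
  change _ = (((List.Nat.antidiagonal n : List (ℕ × ℕ)) : Multiset (ℕ × ℕ)).map _).sum
  rw [Multiset.map_coe, Multiset.sum_coe]
  congr 1
  refine List.map_congr_left fun x _ => ?_
  change _ = (((List.Nat.antidiagonalTuple k x.2 : List (Fin k → ℕ)) :
    Multiset (Fin k → ℕ)).map _).sum
  rw [Multiset.map_coe, Multiset.sum_coe]
  simp only [Function.comp_apply, List.map_map]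
  rfl

theorem sum_Icc_eq_sum_antidiagonal {M : Type*} [AddCommMonoid M] (f : ℕ → ℕ → M) {k n : ℕ}
    (h : k ≤ n) : ∑ l ∈ Icc k n, f (n - l) (l - k) = ∑ x ∈ antidiagonal (n - k), f x.1 x.2 := by
  refine sum_nbij' (fun l => (n - l, l - k)) (fun x => k + x.2) ?_ ?_ ?_ ?_ ?_ <;>
    intro x hx <;> simp only [mem_Icc, HasAntidiagonal.mem_antidiagonal] at hx ⊢
  · omega
  · omega
  · omega
  · ext <;> simp only <;> omega

end Nat

end Finset

section ConvolutionPower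

variable {R : Type*} [CommSemiring R]

/-- The `j`-fold convolution power of `b`, i.e. the coefficients of `(∑ b n X^n) ^ j`. -/
def convPow (b : ℕ → R) (j n : ℕ) : R :=
  ∑ f ∈ Finset.Nat.antidiagonalTuple j n, ∏ t, b (f t)

theorem convPow_zero_left (b : ℕ → R) (n : ℕ) : convPow b 0 n = if n = 0 then 1 else 0 := by
  cases n <;> simp [convPow]

theorem convPow_zero_right (b : ℕ → R) (j : ℕ) : convPow b j 0 = b 0 ^ j := by
  simp [convPow, Finset.Nat.antidiagonalTuple_zero_right]

theorem convPow_succ (b : ℕ → R) (j n : ℕ) :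
    convPow b (j + 1) n = ∑ x ∈ antidiagonal n, b x.1 * convPow b j x.2 := by
  simp only [convPow, Finset.Nat.sum_antidiagonalTuple_succ, Fin.prod_univ_succ, Fin.cons_zero,
    Fin.cons_succ, mul_sum]

end ConvolutionPower

section InfiniteMatrix

variable {F : Type*} [Field F]

def toeplitz (g : ℕ → F) (n k : ℕ) : F :=
  if k ≤ n then g (n - k) else 0

theorem toeplitz_add_add (g : ℕ → F) (n k d : ℕ) : toeplitz g (n + d) (k + d) = toeplitz g n k := by
  simp [toeplitz, Nat.add_sub_add_right]

theorem matPow_toeplitz (b : ℕ → F) (j : ℕ) : matPow (toeplitz b) j = toeplitz (convPow b j) := by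
  induction j with
  | zero =>
    funext n k
    simp only [matPow, toeplitz, convPow_zero_left]
    split_ifs <;> first | rfl | omega
  | succ j ih =>
    funext n k
    simp only [matPow, matMul, ih]
    by_cases hkn : k ≤ n
    · rw [toeplitz, if_pos hkn, convPow_succ,
        ← Nat.sum_Icc_eq_sum_antidiagonal (fun x y => b x * convPow b j y) hkn]
      refine sum_congr rfl fun l hl => ?_
      rw [mem_Icc] at hl
      simp only [toeplitz, if_pos hl.1, if_pos hl.2]
    · simp [toeplitz, hkn, Icc_eq_empty_of_lt (not_le.1 hkn)]

theorem matPow_diagonal_conj (a : ℕ → F) (ha : ∀ n, a n ≠ 0) (B : ℕ → ℕ → F) (j n k : ℕ) :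
    matPow (fun n k => a n * B n k * (a k)⁻¹) j n k = a n * matPow B j n k * (a k)⁻¹ := by
  induction j generalizing n k with
  | zero =>
    simp only [matPow]
    split_ifs with h
    · subst h; field_simp [ha n]
    · simp
  | succ j ih =>
    simp only [matPow, matMul, ih, mul_sum, sum_mul]
    refine sum_congr rfl fun l _ => ?_
    field_simp [ha l]

theorem isSDR_of_shift_invariant {T : ℕ → ℕ → F} (hT : ∀ n k d, T (n + d) (k + d) = T n k)
    (m : ℕ) : IsSDR m T := by
  intro n k p r hp _ hr
  have shift : ∀ {n k n' k'} (d : ℕ), n' = n + d → k' = k + d → T n k = T n' k' := by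
    rintro n k _ _ d rfl rfl
    exact (hT n k d).symm
  congr 1
  · exact prod_range_eq_of_reflect fun i hi => shift (p - r) (by omega) (by omega)
  · exact prod_range_eq_of_reflect fun i hi => (shift (r + 1) (by omega) (by omega)).symm

theorem IsSDR.diagonal_mul_mul_diagonal {m : ℕ} {T : ℕ → ℕ → F} (hT : IsSDR m T)
    (a c : ℕ → F) : IsSDR m (fun n k => a n * T n k * c k) := by
  intro n k p r hp hpm hr
  have hrow : (∏ i ∈ range (r + 1), a (n + i)) * ∏ i ∈ range (p - r), a (n + p - i) =
      (∏ i ∈ range (r + 1), a (n + p - i)) * ∏ i ∈ range (p - r), a (n + i) := by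
    have e₁ : ∏ i ∈ range (p - r), a (n + p - i) = ∏ i ∈ range (p - r), a (n + (r + 1 + i)) :=
      prod_range_eq_of_reflect fun i hi => by congr 1; omega
    have e₂ : ∏ i ∈ range (r + 1), a (n + p - i) = ∏ i ∈ range (r + 1), a (n + (p - r + i)) :=
      prod_range_eq_of_reflect fun i hi => by congr 1; omega
    rw [e₁, e₂, mul_comm _ (∏ i ∈ range (p - r), a (n + i))]
    exact prod_range_mul_prod_range_add_comm (fun i => a (n + i)) _ _
  have hcol : (∏ i ∈ range (r + 1), c (k + r - i)) * ∏ i ∈ range (p - r), c (k + r + i + 1) =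
      (∏ i ∈ range (r + 1), c (k + p - r + i)) * ∏ i ∈ range (p - r), c (k + p - r - i - 1) := by
    have e₁ : ∏ i ∈ range (r + 1), c (k + r - i) = ∏ i ∈ range (r + 1), c (k + i) :=
      prod_range_eq_of_reflect fun i hi => by congr 1; omega
    have e₂ : ∏ i ∈ range (p - r), c (k + p - r - i - 1) = ∏ i ∈ range (p - r), c (k + i) :=
      prod_range_eq_of_reflect fun i hi => by congr 1; omega
    have e₃ : ∏ i ∈ range (p - r), c (k + r + i + 1) = ∏ i ∈ range (p - r), c (k + (r + 1 + i)) :=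
      prod_congr rfl fun i _ => by congr 1; omega
    have e₄ : ∏ i ∈ range (r + 1), c (k + p - r + i) = ∏ i ∈ range (r + 1), c (k + (p - r + i)) :=
      prod_congr rfl fun i _ => by congr 1; omega
    rw [e₁, e₂, e₃, e₄, mul_comm _ (∏ i ∈ range (p - r), c (k + i))]
    exact prod_range_mul_prod_range_add_comm (fun i => c (k + i)) _ _
  have regroup : ∀ x y z x' y' z' : F, x * y * z * (x' * y' * z') = x * x' * (y * y') * (z * z') :=
    fun _ _ _ _ _ _ => by ring
  simp only [prod_mul_distrib]
  rw [regroup, regroup, hrow, hT n k p r hp hpm hr, hcol]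

end InfiniteMatrix

theorem matrix_power_entries_and_isSDR_general {F : Type*} [Field F]
    (a b : ℕ → F) (hb0 : b 0 = 1) (ha : ∀ n, a n ≠ 0)
    (A : ℕ → ℕ → F)
    (hA : ∀ n k, A n k = if k ≤ n then a n * b (n-k) * (a k)⁻¹ else 0)
    (j : ℕ)
    (C : ℕ → F) (hC0 : C 0 = 1)
    (hC : ∀ n, 1 ≤ n → C n =
      ∑ f ∈ Finset.Nat.antidiagonalTuple j n, ∏ t, b (f t)) :
    (∀ n k, k ≤ n → matPow A j n k = a n * C (n-k) * (a k)⁻¹) ∧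
      ∀ m, 3 ≤ m → IsSDR m (matPow A j) := by
  have hA_conj : A = fun n k => a n * toeplitz b n k * (a k)⁻¹ := by
    funext n k
    rw [hA, toeplitz]
    split_ifs <;> simp
  have hC_conv : C = convPow b j := by
    funext n
    rcases n with _ | n
    · rw [hC0, convPow_zero_right, hb0, one_pow]
    · exact hC (n + 1) n.succ_pos
  have hpow : matPow A j = fun n k => a n * toeplitz C n k * (a k)⁻¹ := by
    funext n k
    rw [hA_conj, matPow_diagonal_conj a ha, matPow_toeplitz, hC_conv]
  refine ⟨fun n k hkn => by simp only [hpow, toeplitz, if_pos hkn], fun m _ => ?_⟩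
  rw [hpow]
  exact (isSDR_of_shift_invariant (toeplitz_add_add C) m).diagonal_mul_mul_diagonal a
    fun k => (a k)⁻¹

theorem matrix_power_entries_and_isSDR {F : Type*} [Field F]
    (a b : ℕ → F) (hb0 : b 0 = 1) (ha : ∀ n, a n ≠ 0)
    (A : ℕ → ℕ → F)
    (hA : ∀ n k, A n k = if k ≤ n then a n * b (n-k) * (a k)⁻¹ else 0)
    (j : ℕ) (hj : 1 ≤ j)
    (C : ℕ → F) (hC0 : C 0 = 1)
    (hC : ∀ n, 1 ≤ n → C n =
      ∑ f ∈ Finset.Nat.antidiagonalTuple j n, ∏ t, b (f t)) :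
    (∀ n k, k ≤ n → matPow A j n k = a n * C (n-k) * (a k)⁻¹) ∧
      ∀ m, 3 ≤ m → IsSDR m (matPow A j) :=
  matrix_power_entries_and_isSDR_general a b hb0 ha A hA j C hC0 hC
end

section
/- Let (a_n), (b_n), (c_n) be sequences in a field with b_0 = 1, a_n ≠ 0 and c_n ≠ 0 for all n, let A(n,k) = a_k·b_{n-k}·c_n, and for j ≥ 1 define A_{[j]}(n,k) = det of the j×j matrix with (s,t)-entry A(n+s, k+t) for 0 ≤ s,t ≤ j-1. Then A_{[j]}(n,k) = B_{n-k} · ∏_{i=0}^{j-1} a_{k+i}·c_{n+i}, where B_n = det of the j×j matrix with (s,t)-entry b_{n+s-t}; consequently A_{[j]} is an SDR-matrix of order m for every m ≥ 3. -/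
/-- The sequence `b` extended by zero to negative indices. -/
def bz {F : Type*} [Field F] (b : ℕ → F) (z : ℤ) : F :=
  if 0 ≤ z then b z.toNat else 0

/-!
Factoring `c (n + s)` out of row `s` and `a (k + t)` out of column `t` of the `j × j` minor turns
it into the Toeplitz determinant `B (n - k)`. Hence `A_{[j]}(n, k)` is a product of a function of
`n`, a function of `k` and a function of `n - k`. The Star of David identity is multiplicative in
the matrix, and each such factor satisfies it: on both sides the row indices, the column indices
and the differences `n - k` run through the same values, possibly in reverse order.
-/

open Finset Matrix

theorem Finset.prod_range_eq_of_reflect_s19 {M : Type*} [CommMonoid M] {f g : ℕ → M} {l : ℕ}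
    (h : ∀ i < l, f i = g (l - 1 - i)) : ∏ i ∈ range l, f i = ∏ i ∈ range l, g i := by
  rw [← prod_range_reflect g]
  exact prod_congr rfl fun i hi => h i (mem_range.1 hi)

theorem Matrix.det_of_mul_mul {R ι : Type*} [CommRing R] [Fintype ι] [DecidableEq ι]
    (u v : ι → R) (M : Matrix ι ι R) :
    det (of fun s t => u s * M s t * v t) = (∏ s, u s) * (∏ t, v t) * det M := by
  have h : of (fun s t => u s * M s t * v t) = diagonal u * M * diagonal v := by
    ext s t
    simp only [of_apply, mul_diagonal, diagonal_mul]
  rw [h, det_mul, det_mul, det_diagonal, det_diagonal]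
  ring

section StarOfDavid

variable {F : Type*} [Field F]

theorem IsSDR.mul {m : ℕ} {A A' : ℕ → ℕ → F} (hA : IsSDR m A) (hA' : IsSDR m A') :
    IsSDR m fun n k => A n k * A' n k := by
  intro n k p r hp hpm hr
  simp only [prod_mul_distrib]
  rw [mul_mul_mul_comm, hA n k p r hp hpm hr, hA' n k p r hp hpm hr, mul_mul_mul_comm]

theorem isSDR_of_row (x : ℕ → F) (m : ℕ) : IsSDR m fun n _ => x n := by
  intro n _ p r _ _ hr
  have h₁ : ∏ i ∈ range (p - r), x (n + p - i) = ∏ i ∈ range (p - r), x (n + (r + 1 + i)) :=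
    prod_range_eq_of_reflect_s19 fun i hi => by congr 1; omega
  have h₂ : ∏ i ∈ range (r + 1), x (n + p - i) = ∏ i ∈ range (r + 1), x (n + (p - r + i)) :=
    prod_range_eq_of_reflect_s19 fun i hi => by congr 1; omega
  rw [h₁, h₂, ← prod_range_add (fun i => x (n + i)), mul_comm,
    ← prod_range_add (fun i => x (n + i)), add_comm]

theorem isSDR_of_col (y : ℕ → F) (m : ℕ) : IsSDR m fun _ k => y k := by
  intro _ k p r _ _ hr
  have h₁ : ∏ i ∈ range (r + 1), y (k + r - i) = ∏ i ∈ range (r + 1), y (k + i) :=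
    prod_range_eq_of_reflect_s19 fun i hi => by congr 1; omega
  have h₂ : ∏ i ∈ range (p - r), y (k + r + i + 1) = ∏ i ∈ range (p - r), y (k + (r + 1 + i)) :=
    prod_congr rfl fun i _ => by congr 1; omega
  have h₃ : ∏ i ∈ range (r + 1), y (k + p - r + i) = ∏ i ∈ range (r + 1), y (k + (p - r + i)) :=
    prod_congr rfl fun i _ => by congr 1; omega
  have h₄ : ∏ i ∈ range (p - r), y (k + p - r - i - 1) = ∏ i ∈ range (p - r), y (k + i) :=
    prod_range_eq_of_reflect_s19 fun i hi => by congr 1; omega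
  rw [h₁, h₂, h₃, h₄, ← prod_range_add (fun i => y (k + i)), mul_comm,
    ← prod_range_add (fun i => y (k + i)), add_comm]

theorem isSDR_of_diag (z : ℤ → F) (m : ℕ) : IsSDR m fun n k => z (n - k) := by
  intro n k p r _ _ hr
  beta_reduce
  congr 1 <;> exact prod_range_eq_of_reflect_s19 fun i hi => by congr 1; omega

end StarOfDavid

theorem det_minor_of_eq_mul {R : Type*} [CommRing R] (a c : ℕ → R) (w : ℤ → R)
    (A : ℕ → ℕ → R) (hA : ∀ n k, A n k = a k * w ((n : ℤ) - k) * c n) (j n k : ℕ) :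
    det (of fun s t : Fin j => A (n + s) (k + t)) =
      det (of fun s t : Fin j => w ((n : ℤ) - k + (s : ℕ) - (t : ℕ))) *
        ∏ i ∈ range j, a (k + i) * c (n + i) := by
  have hminor : (of fun s t : Fin j => A (n + s) (k + t)) =
      of fun s t : Fin j =>
        c (n + s) * (of fun s t : Fin j => w ((n : ℤ) - k + (s : ℕ) - (t : ℕ))) s t * a (k + t) := by
    ext s t
    have hdiff : ((n + s : ℕ) : ℤ) - (k + t : ℕ) = n - k + (s : ℕ) - (t : ℕ) := by push_cast; ring
    simp only [of_apply, hA, hdiff]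
    ring
  rw [hminor, det_of_mul_mul, Fin.prod_univ_eq_prod_range (fun i => c (n + i)),
    Fin.prod_univ_eq_prod_range (fun i => a (k + i)), prod_mul_distrib]
  ring

theorem det_transform_isSDR_general {F : Type*} [Field F]
    (a b c : ℕ → F)
    (j : ℕ)
    (A : ℕ → ℕ → F)
    (hA : ∀ n k, A n k = a k * bz b ((n : ℤ) - k) * c n)
    (Aj : ℕ → ℕ → F)
    (hAj : ∀ n k, Aj n k =
      Matrix.det (fun s t : Fin j => A (n + s) (k + t)))
    (B : ℤ → F)
    (hB : ∀ z, B z = Matrix.det (fun s t : Fin j => bz b (z + (s : ℕ) - (t : ℕ)))) :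
    (∀ n k : ℕ, Aj n k =
        B ((n : ℤ) - k) * ∏ i ∈ Finset.range j, a (k+i) * c (n+i)) ∧
      ∀ m, 3 ≤ m → IsSDR m Aj := by
  have hdet : ∀ n k : ℕ, Aj n k = B ((n : ℤ) - k) * ∏ i ∈ range j, a (k + i) * c (n + i) :=
    fun n k => by rw [hAj, hB]; exact det_minor_of_eq_mul a c (bz b) A hA j n k
  refine ⟨hdet, fun m _ => ?_⟩
  have hfactor : Aj = fun n k =>
      (∏ i ∈ range j, c (n + i)) * (∏ i ∈ range j, a (k + i)) * B ((n : ℤ) - k) := by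
    ext n k
    rw [hdet, prod_mul_distrib]
    ring
  rw [hfactor]
  exact ((isSDR_of_row _ m).mul (isSDR_of_col _ m)).mul (isSDR_of_diag B m)

theorem det_transform_isSDR {F : Type*} [Field F]
    (a b c : ℕ → F) (hb0 : b 0 = 1) (ha : ∀ n, a n ≠ 0) (hc : ∀ n, c n ≠ 0)
    (j : ℕ) (hj : 1 ≤ j)
    (A : ℕ → ℕ → F)
    (hA : ∀ n k, A n k = a k * bz b ((n : ℤ) - k) * c n)
    (Aj : ℕ → ℕ → F)
    (hAj : ∀ n k, Aj n k =
      Matrix.det (fun s t : Fin j => A (n + s) (k + t)))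
    (B : ℤ → F)
    (hB : ∀ z, B z = Matrix.det (fun s t : Fin j => bz b (z + (s : ℕ) - (t : ℕ)))) :
    (∀ n k : ℕ, Aj n k =
        B ((n : ℤ) - k) * ∏ i ∈ Finset.range j, a (k+i) * c (n+i)) ∧
      ∀ m, 3 ≤ m → IsSDR m Aj :=
  det_transform_isSDR_general a b c j A hA Aj hAj B hB
end
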